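/- Suppose H(Y|X)=0, I(Y;N)=0, H(X|Y,N)=0, and X' satisfies I(X';Y)=I(X;Y) and I(X';N) ≤ ε. Then I(X'; X) ≤ I(X; Y) + ε. -/

import Mathlib

open Real

noncomputable def mass {Ω α : Type*} [Fintype Ω] [DecidableEq α]
    (p : Ω → ℝ) (X : Ω → α) (x : α) : ℝ :=
  ∑ ω, if X ω = x then p ω else 0

noncomputable def ent {Ω α : Type*} [Fintype Ω] [Fintype α] [DecidableEq α]
    (p : Ω → ℝ) (X : Ω → α) : ℝ :=
  ∑ x, Real.negMulLog (mass p X x)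

noncomputable def condEnt {Ω α β : Type*} [Fintype Ω] [Fintype α] [Fintype β]
    [DecidableEq α] [DecidableEq β] (p : Ω → ℝ) (X : Ω → α) (Y : Ω → β) : ℝ :=
  ent p (fun ω => (X ω, Y ω)) - ent p Y

noncomputable def mi {Ω α β : Type*} [Fintype Ω] [Fintype α] [Fintype β]
    [DecidableEq α] [DecidableEq β] (p : Ω → ℝ) (X : Ω → α) (Y : Ω → β) : ℝ :=
  ent p X + ent p Y - ent p (fun ω => (X ω, Y ω))

noncomputable def cmi {Ω α β γ : Type*} [Fintype Ω] [Fintype α] [Fintype β] [Fintype γ]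
    [DecidableEq α] [DecidableEq β] [DecidableEq γ]
    (p : Ω → ℝ) (A : Ω → α) (B : Ω → β) (C : Ω → γ) : ℝ :=
  condEnt p A C - condEnt p A (fun ω => (B ω, C ω))

/-!
Since `X` is a function of `(Y, N)`, data processing gives `I(X'; X) ≤ I(X'; Y, N)`, and
`I(X'; Y, N) = I(X'; N) + I(X'; Y | N) ≤ ε + H(Y | N)`. Independence of `Y` and `N` makes
`H(Y | N) = H(Y)`, and `H(Y | X) = 0` makes `H(Y) = I(X; Y)`. Besides monotonicity of entropy
under functions, the only inequality needed is strong subadditivity, which follows from Gibbs'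
inequality applied on each slice `{A = a}`.
-/

open Finset

lemma mul_log_le_mul_log_add_sub {a b : ℝ} (ha : 0 ≤ a) (hb : 0 ≤ b) (hab : 0 < a → 0 < b) :
    a * log b ≤ a * log a + (b - a) := by
  rcases ha.eq_or_lt with rfl | ha
  · simpa using hb
  have hb := hab ha
  calc a * log b = a * log a + a * log (b / a) := by
        rw [log_div hb.ne' ha.ne']
        ring
    _ ≤ a * log a + a * (b / a - 1) := by
        gcongr
        exact log_le_sub_one_of_pos (div_pos hb ha)
    _ = a * log a + (b - a) := by field_simp

/-- Gibbs' inequality. -/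
lemma sum_mul_log_le_sum_mul_log {ι : Type*} (s : Finset ι) {a b : ι → ℝ}
    (ha : ∀ i ∈ s, 0 ≤ a i) (hb : ∀ i ∈ s, 0 ≤ b i) (hab : ∀ i ∈ s, 0 < a i → 0 < b i)
    (hsum : ∑ i ∈ s, b i ≤ ∑ i ∈ s, a i) :
    ∑ i ∈ s, a i * log (b i) ≤ ∑ i ∈ s, a i * log (a i) :=
  calc ∑ i ∈ s, a i * log (b i)
      ≤ ∑ i ∈ s, (a i * log (a i) + (b i - a i)) :=
        sum_le_sum fun i hi => mul_log_le_mul_log_add_sub (ha i hi) (hb i hi) (hab i hi)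
    _ ≤ ∑ i ∈ s, a i * log (a i) := by
        rw [sum_add_distrib, sum_sub_distrib]
        linarith

lemma negMulLog_sum_le {ι : Type*} (s : Finset ι) {f : ι → ℝ} (hf : ∀ i ∈ s, 0 ≤ f i) :
    negMulLog (∑ i ∈ s, f i) ≤ ∑ i ∈ s, negMulLog (f i) := by
  simp only [negMulLog_eq_neg, sum_mul, ← sum_neg_distrib]
  refine sum_le_sum fun i hi => neg_le_neg ?_
  rcases (hf i hi).eq_or_lt with h | h
  · simp [← h]
  · exact mul_le_mul_of_nonneg_left (log_le_log h (single_le_sum hf hi)) h.le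

lemma sum_negMulLog_add_negMulLog_sum_le {β γ : Type*} [Fintype β] [Fintype γ]
    {r : β → γ → ℝ} (hr : ∀ b c, 0 ≤ r b c) :
    ∑ b, ∑ c, negMulLog (r b c) + negMulLog (∑ b, ∑ c, r b c) ≤
      ∑ b, negMulLog (∑ c, r b c) + ∑ c, negMulLog (∑ b, r b c) := by
  set u := fun b => ∑ c, r b c
  set v := fun c => ∑ b, r b c
  set s := ∑ b, ∑ c, r b c
  have hu b c : r b c ≤ u b := single_le_sum (fun c _ => hr b c) (mem_univ c)
  have hv b c : r b c ≤ v c := single_le_sum (fun b _ => hr b c) (mem_univ b)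
  have hs b c : r b c ≤ s :=
    (hu b c).trans (single_le_sum (fun b _ => sum_nonneg fun c _ => hr b c) (mem_univ b))
  have hmass : ∑ b, ∑ c, u b * v c / s = s := by
    have hus : ∑ b, u b = s := rfl
    have hvs : ∑ c, v c = s := sum_comm
    simp only [mul_div_assoc, ← mul_sum, ← sum_div, hvs, ← sum_mul, hus]
    rcases eq_or_ne s 0 with h | h
    · simp [h]
    · rw [div_self h, mul_one]
  -- Gibbs against the product of the marginals `u b * v c / s`, whose total mass is `s`
  have gibbs : ∑ b, ∑ c, r b c * log (u b * v c / s) ≤ ∑ b, ∑ c, r b c * log (r b c) := by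
    simp only [← Fintype.sum_prod_type']
    refine sum_mul_log_le_sum_mul_log _ (fun i _ => hr _ _) ?_ ?_ ?_
    · rintro ⟨b, c⟩ -
      have h := hr b c
      exact div_nonneg (mul_nonneg (h.trans (hu b c)) (h.trans (hv b c))) (h.trans (hs b c))
    · rintro ⟨b, c⟩ - h
      exact div_pos (mul_pos (h.trans_le (hu b c)) (h.trans_le (hv b c))) (h.trans_le (hs b c))
    · exact ((Fintype.sum_prod_type' _).trans hmass).trans_le (Fintype.sum_prod_type' r).ge
  have split b c :
      r b c * log (u b * v c / s) = r b c * log (u b) + r b c * log (v c) - r b c * log s := by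
    rcases (hr b c).eq_or_lt with h | h
    · simp [← h]
    rw [log_div (mul_pos (h.trans_le (hu b c)) (h.trans_le (hv b c))).ne' (h.trans_le (hs b c)).ne',
      log_mul (h.trans_le (hu b c)).ne' (h.trans_le (hv b c)).ne']
    ring
  simp only [split, sum_sub_distrib, sum_add_distrib, ← sum_mul] at gibbs
  rw [sum_comm (f := fun b c => r b c * log (v c))] at gibbs
  simp only [← sum_mul] at gibbs
  simp only [negMulLog_eq_neg, sum_neg_distrib]
  linarith

section Entropy

variable {Ω : Type*}

def sliceWeight {α : Type*} [DecidableEq α] (p : Ω → ℝ) (A : Ω → α) (a : α) : Ω → ℝ :=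
  fun ω => if A ω = a then p ω else 0

lemma sliceWeight_nonneg {α : Type*} [DecidableEq α] {p : Ω → ℝ} (hp : ∀ ω, 0 ≤ p ω)
    (A : Ω → α) (a : α) (ω : Ω) : 0 ≤ sliceWeight p A a ω := by
  unfold sliceWeight
  split_ifs
  exacts [hp ω, le_rfl]

variable [Fintype Ω]

lemma mass_nonneg {α : Type*} [DecidableEq α] {p : Ω → ℝ} (hp : ∀ ω, 0 ≤ p ω)
    (X : Ω → α) (x : α) : 0 ≤ mass p X x :=
  sum_nonneg fun ω _ => sliceWeight_nonneg hp X x ω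

lemma sum_sliceWeight {α : Type*} [DecidableEq α] (p : Ω → ℝ) (A : Ω → α) (a : α) :
    ∑ ω, sliceWeight p A a ω = mass p A a :=
  rfl

lemma sum_mass {α : Type*} [Fintype α] [DecidableEq α] (p : Ω → ℝ) (X : Ω → α) :
    ∑ x, mass p X x = ∑ ω, p ω := by
  unfold mass
  rw [sum_comm]
  simp

lemma mass_prodMk_left {α β : Type*} [DecidableEq α] [DecidableEq β] (p : Ω → ℝ)
    (A : Ω → α) (Z : Ω → β) (a : α) (z : β) :
    mass p (fun ω => (A ω, Z ω)) (a, z) = mass (sliceWeight p A a) Z z := by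
  unfold mass sliceWeight
  simp only [Prod.mk.injEq, ← ite_and, and_comm]

lemma mass_prodMk_right {α β : Type*} [DecidableEq α] [DecidableEq β] (p : Ω → ℝ)
    (A : Ω → α) (Z : Ω → β) (a : α) (z : β) :
    mass p (fun ω => (Z ω, A ω)) (z, a) = mass (sliceWeight p A a) Z z := by
  unfold mass sliceWeight
  simp only [Prod.mk.injEq, ite_and]

lemma sum_mass_prodMk_left {α β : Type*} [Fintype β] [DecidableEq α] [DecidableEq β]
    (p : Ω → ℝ) (A : Ω → α) (Z : Ω → β) (a : α) :
    ∑ z, mass p (fun ω => (A ω, Z ω)) (a, z) = mass p A a := by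
  simp only [mass_prodMk_left, sum_mass, sum_sliceWeight]

lemma sum_mass_prodMk_right {α β : Type*} [Fintype β] [DecidableEq α] [DecidableEq β]
    (p : Ω → ℝ) (A : Ω → α) (Z : Ω → β) (a : α) :
    ∑ z, mass p (fun ω => (Z ω, A ω)) (z, a) = mass p A a := by
  simp only [mass_prodMk_right, sum_mass, sum_sliceWeight]

lemma ent_prodMk {α β : Type*} [Fintype α] [Fintype β] [DecidableEq α] [DecidableEq β]
    (p : Ω → ℝ) (A : Ω → α) (Z : Ω → β) :
    ent p (fun ω => (A ω, Z ω)) = ∑ a, ent (sliceWeight p A a) Z := by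
  unfold ent
  simp only [Fintype.sum_prod_type, mass_prodMk_left]

lemma ent_comp_le {α β : Type*} [Fintype α] [Fintype β] [DecidableEq α] [DecidableEq β]
    {p : Ω → ℝ} (hp : ∀ ω, 0 ≤ p ω) (Z : Ω → α) (f : α → β) :
    ent p (fun ω => f (Z ω)) ≤ ent p Z := by
  have hmass b : mass p (fun ω => f (Z ω)) b = ∑ a with f a = b, mass p Z a := by
    unfold mass
    rw [sum_comm]
    refine sum_congr rfl fun ω _ => ?_
    rw [sum_ite_eq]
    simp only [mem_filter, mem_univ, true_and]
  unfold ent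
  simp only [hmass]
  calc ∑ b, negMulLog (∑ a with f a = b, mass p Z a)
      ≤ ∑ b, ∑ a with f a = b, negMulLog (mass p Z a) :=
        sum_le_sum fun b _ => negMulLog_sum_le _ fun a _ => mass_nonneg hp Z a
    _ = ∑ a, negMulLog (mass p Z a) := sum_fiberwise _ _ _

lemma ent_swap {α β : Type*} [Fintype α] [Fintype β] [DecidableEq α] [DecidableEq β]
    {p : Ω → ℝ} (hp : ∀ ω, 0 ≤ p ω) (A : Ω → α) (B : Ω → β) :
    ent p (fun ω => (A ω, B ω)) = ent p (fun ω => (B ω, A ω)) :=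
  le_antisymm (ent_comp_le hp (fun ω => (B ω, A ω)) Prod.swap)
    (ent_comp_le hp (fun ω => (A ω, B ω)) Prod.swap)

lemma ent_prodMk_add_negMulLog_le {α β : Type*} [Fintype α] [Fintype β] [DecidableEq α]
    [DecidableEq β] {p : Ω → ℝ} (hp : ∀ ω, 0 ≤ p ω) (A : Ω → α) (B : Ω → β) :
    ent p (fun ω => (A ω, B ω)) + negMulLog (∑ ω, p ω) ≤ ent p A + ent p B := by
  have h := sum_negMulLog_add_negMulLog_sum_le
    (r := fun a b => mass p (fun ω => (A ω, B ω)) (a, b)) fun a b => mass_nonneg hp _ _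
  simp only [sum_mass_prodMk_left, sum_mass_prodMk_right, sum_mass] at h
  unfold ent
  rwa [Fintype.sum_prod_type]

/-- Subadditivity on each slice `{A = a}`; the slices are not normalised, which is why
subadditivity is proved for arbitrary nonnegative weights. -/
lemma ent_prodMk_prodMk_add_ent_le {α β γ : Type*} [Fintype α] [Fintype β] [Fintype γ]
    [DecidableEq α] [DecidableEq β] [DecidableEq γ] {p : Ω → ℝ} (hp : ∀ ω, 0 ≤ p ω)
    (A : Ω → α) (B : Ω → β) (C : Ω → γ) :
    ent p (fun ω => (A ω, B ω, C ω)) + ent p A ≤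
      ent p (fun ω => (A ω, B ω)) + ent p (fun ω => (A ω, C ω)) := by
  have hA : ent p A = ∑ a, negMulLog (∑ ω, sliceWeight p A a ω) := rfl
  rw [ent_prodMk, ent_prodMk, ent_prodMk, hA, ← sum_add_distrib, ← sum_add_distrib]
  exact sum_le_sum fun a _ => ent_prodMk_add_negMulLog_le (sliceWeight_nonneg hp A a) B C

end Entropy

section Information

variable {Ω α β γ : Type*} [Fintype Ω] [Fintype α] [Fintype β] [Fintype γ]
  [DecidableEq α] [DecidableEq β] [DecidableEq γ]

lemma mi_le_mi_of_condEnt_eq_zero {p : Ω → ℝ} (hp : ∀ ω, 0 ≤ p ω)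
    (W : Ω → α) (X : Ω → β) (Z : Ω → γ) (hXZ : condEnt p X Z = 0) :
    mi p W X ≤ mi p W Z := by
  have ssa := ent_prodMk_prodMk_add_ent_le hp X W Z
  have hWZ := ent_comp_le hp (fun ω => (X ω, W ω, Z ω)) fun q => (q.2.1, q.2.2)
  rw [ent_swap hp X W] at ssa
  unfold condEnt at hXZ
  unfold mi
  linarith

lemma mi_prodMk_le {p : Ω → ℝ} (hp : ∀ ω, 0 ≤ p ω) (W : Ω → α) (Y : Ω → β) (N : Ω → γ) :
    mi p W (fun ω => (Y ω, N ω)) ≤ mi p W N + condEnt p Y N := by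
  have := ent_comp_le hp (fun ω => (W ω, Y ω, N ω)) fun q => (q.1, q.2.2)
  unfold mi condEnt
  linarith

lemma condEnt_eq_ent_of_mi_eq_zero {p : Ω → ℝ} {Y : Ω → α} {N : Ω → β} (h : mi p Y N = 0) :
    condEnt p Y N = ent p Y := by
  unfold mi at h
  unfold condEnt
  linarith

lemma mi_eq_ent_right_of_condEnt_eq_zero {p : Ω → ℝ} (hp : ∀ ω, 0 ≤ p ω) {X : Ω → α}
    {Y : Ω → β} (h : condEnt p Y X = 0) : mi p X Y = ent p Y := by
  unfold condEnt at h
  unfold mi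
  rw [ent_swap hp X Y]
  linarith

end Information

theorem stmt_7_general {Ω α α' β γ : Type*} [Fintype Ω] [Fintype α] [DecidableEq α]
    [Fintype α'] [DecidableEq α'] [Fintype β] [DecidableEq β] [Fintype γ] [DecidableEq γ]
    (p : Ω → ℝ) (hp : ∀ ω, 0 ≤ p ω)
    (X : Ω → α) (X' : Ω → α') (Y : Ω → β) (N : Ω → γ) (ε : ℝ)
    (hYX : condEnt p Y X = 0)
    (hYN : mi p Y N = 0)
    (hXdet : condEnt p X (fun ω => (Y ω, N ω)) = 0)
    (hmin : mi p X' N ≤ ε) :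
    mi p X' X ≤ mi p X Y + ε :=
  calc mi p X' X
      ≤ mi p X' (fun ω => (Y ω, N ω)) := mi_le_mi_of_condEnt_eq_zero hp X' X _ hXdet
    _ ≤ mi p X' N + condEnt p Y N := mi_prodMk_le hp X' Y N
    _ ≤ mi p X Y + ε := by
        rw [condEnt_eq_ent_of_mi_eq_zero hYN, mi_eq_ent_right_of_condEnt_eq_zero hp hYX]
        linarith

theorem stmt_7 {Ω α α' β γ : Type*} [Fintype Ω] [Fintype α] [DecidableEq α]
    [Fintype α'] [DecidableEq α'] [Fintype β] [DecidableEq β] [Fintype γ] [DecidableEq γ]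
    (p : Ω → ℝ) (hp : ∀ ω, 0 ≤ p ω) (hsum : ∑ ω, p ω = 1)
    (X : Ω → α) (X' : Ω → α') (Y : Ω → β) (N : Ω → γ) (ε : ℝ) (hε : 0 ≤ ε)
    (hYX : condEnt p Y X = 0)
    (hYN : mi p Y N = 0)
    (hXdet : condEnt p X (fun ω => (Y ω, N ω)) = 0)
    (hsuff : mi p X' Y = mi p X Y)
    (hmin : mi p X' N ≤ ε) :
    mi p X' X ≤ mi p X Y + ε :=
  stmt_7_general p hp X X' Y N ε hYX hYN hXdet hmin
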